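/- arXiv:2102.08674 — 6 statements merged into one kernel-verified Lean document; each statement's English description precedes it below -/
import Mathlib

section
/- Every derivation of the polynomial ring k[x₁,...,xₙ] over a field k of characteristic zero can be written as a single Lie bracket of two derivations; concretely, for any derivation μ there exist derivations δ₁, δ₂ with μ = δ₁∘δ₂ - δ₂∘δ₁. -/
/-!
Over a field of characteristic zero every polynomial has an antiderivative in `x₀`,
so the values `μ(xⱼ)` can be integrated to polynomials `gⱼ` with `∂₀ gⱼ = μ(xⱼ)`.
The derivation `D` with `D(xⱼ) = gⱼ` then satisfies `[∂₀, D](xⱼ) = μ(xⱼ)`, because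
`∂₀(xⱼ)` is a constant and is killed by `D`; hence `μ = [∂₀, D]`.
-/

namespace MvPolynomial

variable {k σ : Type*} [Field k] [CharZero k]

theorem pderiv_surjective (i : σ) :
    Function.Surjective (pderiv i : MvPolynomial σ k → MvPolynomial σ k) := by
  intro f
  induction f using induction_on' with
  | monomial s c =>
    have hs : (s i : k) + 1 ≠ 0 := Nat.cast_add_one_ne_zero _
    refine ⟨monomial (s + Finsupp.single i 1) (c / ((s i : k) + 1)), ?_⟩
    simp [div_mul_cancel₀ _ hs]
  | add p q hp hq =>
    obtain ⟨p', rfl⟩ := hp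
    obtain ⟨q', rfl⟩ := hq
    exact ⟨p' + q', map_add _ _ _⟩

theorem exists_lie_pderiv_eq (i : σ) (μ : Derivation k (MvPolynomial σ k) (MvPolynomial σ k)) :
    ∃ D : Derivation k (MvPolynomial σ k) (MvPolynomial σ k), ⁅pderiv (R := k) i, D⁆ = μ := by
  choose g hg using fun j => pderiv_surjective i (μ (X j))
  refine ⟨mkDerivation k g, derivation_ext fun j => ?_⟩
  rw [Derivation.commutator_apply, mkDerivation_X, hg]
  rcases eq_or_ne j i with rfl | hji
  · simp
  · simp [pderiv_X_of_ne hji]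

end MvPolynomial

/-- Every derivation of the polynomial ring `k[x₁,...,xₙ]` over a field `k` of
characteristic zero is a single Lie bracket of two derivations:
`μ = δ₁∘δ₂ - δ₂∘δ₁`. -/
theorem derivation_mvPolynomial_is_single_bracket
    (k : Type*) [Field k] [CharZero k] (n : ℕ)
    (μ : Derivation k (MvPolynomial (Fin n) k) (MvPolynomial (Fin n) k)) :
    ∃ δ₁ δ₂ : Derivation k (MvPolynomial (Fin n) k) (MvPolynomial (Fin n) k),
      ∀ f : MvPolynomial (Fin n) k, μ f = δ₁ (δ₂ f) - δ₂ (δ₁ f) := by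
  rcases isEmpty_or_nonempty (Fin n) with hn | ⟨⟨i⟩⟩
  · have hμ : μ = 0 := MvPolynomial.derivation_ext isEmptyElim
    exact ⟨0, 0, fun f => by simp [hμ]⟩
  · obtain ⟨D, hD⟩ := MvPolynomial.exists_lie_pderiv_eq i μ
    exact ⟨MvPolynomial.pderiv i, D, fun f => by rw [← hD, Derivation.commutator_apply]⟩
end

section
/- Every derivation of the Laurent polynomial ring k[x,x⁻¹] over a field k of characteristic zero can be written as a single Lie bracket of two derivations. -/
/-!
Let `E = x d/dx` be the Euler derivation, so `E xⁿ = n xⁿ`. A derivation is determined by its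
value on `x`, hence every derivation is `g • E` for a Laurent polynomial `g`, and
`⁅a • E, b • E⁆ = (a E b - b E a) • E`. For `a = xˢ` this is `xˢ (E - s) b`. The operator `E - s`
acts on `xⁿ` by `n - s`, so it reaches every Laurent polynomial without an `xˢ` term; choosing `s`
so that `g` has no `x²ˢ` term, `x⁻ˢ g` is `(E - s) b` for some `b`, and `g • E = ⁅xˢ • E, b • E⁆`.
-/

namespace AddMonoidAlgebra

variable {R M : Type*} [CommSemiring R] [AddCommMonoid M] (φ : M →+ R)

noncomputable def eulerLinearMap : R[M] →ₗ[R] R[M] :=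
  Finsupp.lsum R (fun m => φ m • lsingle m) ∘ₗ (coeffLinearEquiv R).toLinearMap

@[simp]
lemma eulerLinearMap_single (m : M) (r : R) :
    eulerLinearMap φ (single m r) = single m (φ m * r) := by
  simp [eulerLinearMap]

lemma eulerLinearMap_mul (x y : R[M]) :
    eulerLinearMap φ (x * y) = x • eulerLinearMap φ y + y • eulerLinearMap φ x := by
  induction x using induction_linear with
  | zero => simp
  | add x x' hx hx' => simp only [add_mul, map_add, hx, hx', add_smul, smul_add]; abel
  | single m r =>
    induction y using induction_linear with
    | zero => simp
    | add y y' hy hy' => simp only [mul_add, map_add, hy, hy', add_smul, smul_add]; abel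
    | single n t =>
      simp only [single_mul_single, eulerLinearMap_single, smul_eq_mul, map_add, add_comm n m,
        ← single_add]
      ring_nf

noncomputable def eulerDerivation : Derivation R R[M] R[M] where
  toLinearMap := eulerLinearMap φ
  map_one_eq_zero' := by simp [one_def]
  leibniz' := eulerLinearMap_mul φ

@[simp]
lemma eulerDerivation_single (m : M) (r : R) :
    eulerDerivation φ (single m r) = single m (φ m * r) :=
  eulerLinearMap_single φ m r

lemma exists_eulerDerivation_sub_smul_eq {K : Type*} [Field K] (φ : M →+ K) (c : K) (g : K[M])
    (hg : ∀ m ∈ g.coeff.support, φ m ≠ c) :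
    ∃ q, eulerDerivation φ q - c • q = g := by
  let L : K[M] →ₗ[K] K[M] := (eulerDerivation φ).toLinearMap - c • LinearMap.id
  suffices g ∈ LinearMap.range L from this
  rw [← sum_coeff_single g]
  refine Submodule.finsuppSum_mem _ _ _ _ fun m hm => ⟨single m (g.coeff m / (φ m - c)), ?_⟩
  have hc : φ m - c ≠ 0 := sub_ne_zero.mpr (hg m (Finsupp.mem_support_iff.mpr hm))
  simp only [L, LinearMap.sub_apply, Derivation.coeFn_coe, eulerDerivation_single,
    LinearMap.smul_apply, LinearMap.id_apply, smul_single', ← single_sub]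
  congr 1
  field_simp

end AddMonoidAlgebra

namespace Derivation

variable {R A : Type*} [CommRing R] [CommRing A] [Algebra R A]

lemma commutator_smul_smul (D : Derivation R A A) (a b : A) :
    ⁅a • D, b • D⁆ = (a * D b - b * D a) • D := by
  ext x
  simp only [commutator_apply, smul_apply, smul_eq_mul, leibniz]
  ring

end Derivation

namespace LaurentPolynomial

variable {R : Type*} [CommRing R]

lemma eulerDerivation_T (n : ℤ) :
    AddMonoidAlgebra.eulerDerivation (Int.castAddHom R) (T n) = n • T n := by
  simp only [T, AddMonoidAlgebra.eulerDerivation_single, Int.coe_castAddHom, mul_one,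
    AddMonoidAlgebra.smul_single, Int.smul_one_eq_cast]

lemma coeff_T_mul (n m : ℤ) (f : R[T;T⁻¹]) : (T n * f).coeff m = f.coeff (m - n) := by
  rw [T, AddMonoidAlgebra.coeff_single_mul_apply, one_mul, neg_add_eq_sub]

lemma T_mem_adjoin (n : ℤ) : (T n : R[T;T⁻¹]) ∈ Algebra.adjoin R {T 1, T (-1)} := by
  induction n using Int.induction_on with
  | zero => exact T_zero (R := R) ▸ one_mem _
  | succ n ih => rw [T_add]; exact mul_mem ih (Algebra.subset_adjoin (by simp))
  | pred n ih => rw [T_sub]; exact mul_mem ih (Algebra.subset_adjoin (by simp))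

lemma adjoin_T_one_T_neg_one : Algebra.adjoin R {(T 1 : R[T;T⁻¹]), T (-1)} = ⊤ := by
  rw [eq_top_iff]
  rintro p -
  induction p using LaurentPolynomial.induction_on' with
  | add p q hp hq => exact add_mem hp hq
  | C_mul_T n a =>
    exact mul_mem (C_eq_algebraMap a ▸ Subalgebra.algebraMap_mem _ a) (T_mem_adjoin n)

lemma derivation_ext {M : Type*} [AddCommGroup M] [Module R[T;T⁻¹] M] [Module R M]
    {D₁ D₂ : Derivation R R[T;T⁻¹] M} (h : D₁ (T 1) = D₂ (T 1)) : D₁ = D₂ := by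
  refine Derivation.ext_of_adjoin_eq_top _ adjoin_T_one_T_neg_one ?_
  rintro x (rfl | rfl)
  · exact h
  · rw [← invOf_T, Derivation.leibniz_invOf, Derivation.leibniz_invOf, h]

lemma eq_smul_eulerDerivation (D : Derivation R R[T;T⁻¹] R[T;T⁻¹]) :
    D = (T (-1) * D (T 1)) • AddMonoidAlgebra.eulerDerivation (Int.castAddHom R) := by
  refine derivation_ext ?_
  rw [Derivation.smul_apply, eulerDerivation_T, one_smul, smul_eq_mul, mul_right_comm, ← T_add]
  simp [T_zero]

end LaurentPolynomial

open LaurentPolynomial in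
/-- Every derivation of the Laurent polynomial ring `k[x,x⁻¹]` over a field `k`
of characteristic zero is a single Lie bracket of two derivations. -/
theorem derivation_laurent_is_single_bracket
    (k : Type*) [Field k] [CharZero k]
    (μ : Derivation k (LaurentPolynomial k) (LaurentPolynomial k)) :
    ∃ δ₁ δ₂ : Derivation k (LaurentPolynomial k) (LaurentPolynomial k),
      μ = ⁅δ₁, δ₂⁆ := by
  set E := AddMonoidAlgebra.eulerDerivation (Int.castAddHom k)
  set f := T (-1) * μ (T 1)
  obtain ⟨s, hs⟩ : ∃ s : ℤ, f.coeff (2 * s) = 0 := by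
    obtain ⟨s, hs⟩ := Infinite.exists_notMem_finset
      (f.coeff.support.preimage (2 * ·) (mul_right_injective₀ two_ne_zero).injOn)
    exact ⟨s, by simpa using hs⟩
  obtain ⟨q, hq⟩ := AddMonoidAlgebra.exists_eulerDerivation_sub_smul_eq (Int.castAddHom k) s
    (T (-s) * f) fun m hm hms => by
      rw [Int.coe_castAddHom, Int.cast_inj] at hms
      subst hms
      rw [Finsupp.mem_support_iff, coeff_T_mul, sub_neg_eq_add, ← two_mul] at hm
      exact hm hs
  refine ⟨(T s : k[T;T⁻¹]) • E, q • E, ?_⟩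
  rw [Derivation.commutator_smul_smul, eulerDerivation_T, eq_smul_eulerDerivation μ]
  congr 1
  calc f = T s * (T (-s) * f) := by rw [← mul_assoc, ← T_add, add_neg_cancel, T_zero, one_mul]
    _ = T s * E q - q * (s • T s) := by rw [← hq, Int.cast_smul_eq_zsmul]; ring
end

section
/- Let C = A¹ \ {p₁,...,pₙ} be the complement of n ≥ 1 distinct points in the affine line over an algebraically closed field k of characteristic zero, with coordinate ring R = k[x, (∏ᵢ(x-pᵢ))⁻¹]. Then every derivation of R can be written as a sum of two Lie brackets: μ = [∂ₓ, ν] + [x∂ₓ, δ] for suitable derivations ν, δ. -/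
/-!
Every derivation of `R = k[x]_f` is `g • ∂ₓ` with `g = μ x`, and
`⁅∂ₓ, a • ∂ₓ⁆ + ⁅x∂ₓ, b • ∂ₓ⁆ = (∂ₓ a + x ∂ₓ b - b) • ∂ₓ`, so it suffices that
`R = ∂ₓ R + (x∂ₓ - 1) R`. Polynomials have antiderivatives. Since `f` is separable,
`c f + d f' = 1` for some `c, d`, and then `∂ₓ (q d / f^m) = (q d)' / f^m - m q d f' / f^(m+1)`
shows that `q / f^(m+1)` is congruent to a fraction with denominator `f^m` modulo `∂ₓ R` when
`m ≥ 1`. Partial fractions reduce `q / f` to the simple fractions `v = 1 / (x - pᵢ)`, and since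
`∂ₓ v = -v²`, `v = ∂ₓ (pᵢ v / 2) + (x∂ₓ - 1) (-v / 2)`.
-/

open Polynomial

theorem Polynomial.derivative_surjective {k : Type*} [Field k] [CharZero k] :
    Function.Surjective (derivative : k[X] →ₗ[k] k[X]) := by
  intro q
  induction q using Polynomial.induction_on' with
  | add p q hp hq =>
    obtain ⟨a, rfl⟩ := hp
    obtain ⟨b, rfl⟩ := hq
    exact ⟨a + b, map_add _ _ _⟩
  | monomial n c =>
    refine ⟨monomial (n + 1) (c / (n + 1)), ?_⟩
    rw [derivative_monomial]
    congr 1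
    push_cast
    field_simp

section PolynomialAlgebra

variable {k A : Type*} [CommSemiring k] [CommSemiring A] [Algebra k A] [Algebra k[X] A]
  [IsScalarTower k k[X] A]

theorem algebraMap_polynomial_C (a : k) : algebraMap k[X] A (C a) = algebraMap k A a := by
  rw [IsScalarTower.algebraMap_apply k k[X] A, algebraMap_eq]

theorem Derivation.map_algebraMap_polynomial {M : Type*} [AddCommMonoid M] [Module A M]
    [Module k M] (D : Derivation k A M) (q : k[X]) :
    D (algebraMap k[X] A q) = algebraMap k[X] A (derivative q) • D (algebraMap k[X] A X) := by
  have h : ∀ r : k[X], algebraMap k[X] A r = aeval (algebraMap k[X] A X) r := fun r => by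
    rw [← IsScalarTower.coe_toAlgHom' k k[X] A, aeval_algHom_apply, aeval_X_left_apply]
  rw [h q, map_aeval, ← h]

theorem Derivation.map_algebraMap_polynomial_of_map_X_eq_one {D : Derivation k A A}
    (hD : D (algebraMap k[X] A X) = 1) (q : k[X]) :
    D (algebraMap k[X] A q) = algebraMap k[X] A (derivative q) := by
  rw [D.map_algebraMap_polynomial, hD, smul_eq_mul, mul_one]

end PolynomialAlgebra

namespace Derivation

theorem ext_of_isLocalization {k A S M : Type*} [CommRing k] [CommRing A] [CommRing S]
    [Algebra k S] [Algebra A S] [AddCommGroup M] [Module S M] [Module k M]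
    (N : Submonoid A) [IsLocalization N S] {D₁ D₂ : Derivation k S M}
    (h : ∀ a, D₁ (algebraMap A S a) = D₂ (algebraMap A S a)) : D₁ = D₂ := by
  ext z
  obtain ⟨⟨a, s⟩, hs⟩ := IsLocalization.surj N z
  have h₁ := congrArg D₁ hs
  have h₂ := congrArg D₂ hs
  rw [leibniz, h, h] at h₁
  rw [leibniz, ← h₁, add_right_inj] at h₂
  exact ((IsLocalization.map_units S s).smul_left_cancel).1 h₂.symm

theorem ext_of_isLocalization_polynomial {k S M : Type*} [CommRing k] [CommRing S]
    [Algebra k S] [Algebra k[X] S] [IsScalarTower k k[X] S] [AddCommGroup M] [Module S M]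
    [Module k M] (N : Submonoid k[X]) [IsLocalization N S] {D₁ D₂ : Derivation k S M}
    (h : D₁ (algebraMap k[X] S X) = D₂ (algebraMap k[X] S X)) : D₁ = D₂ :=
  ext_of_isLocalization N fun q => by
    rw [map_algebraMap_polynomial D₁, map_algebraMap_polynomial D₂, h]

theorem map_pow_of_mul_eq_one {k R : Type*} [CommRing k] [CommRing R] [Algebra k R]
    {D : Derivation k R R} {f w : R} (hw : f * w = 1) (m : ℕ) :
    D (w ^ m) = -(m * D f * w ^ (m + 1)) := by
  have hDw : D w = -(D f * w ^ 2) := by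
    rw [D.leibniz_of_mul_eq_one (mul_comm w _ ▸ hw), smul_eq_mul]
    ring
  rcases m with _ | m
  · simp
  · rw [D.leibniz_pow, hDw, nsmul_eq_mul, smul_eq_mul]
    push_cast
    ring

end Derivation

section TwoBrackets

variable {k R : Type*} [CommRing k] [CommRing R] [Algebra k R]

def twoBracketSpan (D : Derivation k R R) (t : R) : Submodule k R :=
  LinearMap.range (D : R →ₗ[k] R) ⊔
    LinearMap.range (((t • D : Derivation k R R) : R →ₗ[k] R) - LinearMap.id)

theorem mem_twoBracketSpan {D : Derivation k R R} {t g : R} :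
    g ∈ twoBracketSpan D t ↔ ∃ a b, D a + (t * D b - b) = g := by
  simp [twoBracketSpan, Submodule.mem_sup]

theorem range_le_twoBracketSpan (D : Derivation k R R) (t : R) :
    LinearMap.range (D : R →ₗ[k] R) ≤ twoBracketSpan D t :=
  le_sup_left

theorem Derivation.lie_smul_add_lie_smul_smul {D : Derivation k R R} {t : R} (hD : D t = 1)
    (a b : R) : ⁅D, a • D⁆ + ⁅t • D, b • D⁆ = (D a + (t * D b - b)) • D := by
  ext x
  simp only [commutator_apply, smul_apply, add_apply, leibniz, smul_eq_mul, hD]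
  ring

end TwoBrackets

theorem mem_twoBracketSpan_of_mul_eq_one {k R : Type*} [Field k] [CharZero k] [CommRing R]
    [Algebra k R] {D : Derivation k R R} {t : R} (hD : D t = 1) (c : k) {v : R}
    (hv : (t - algebraMap k R c) * v = 1) : v ∈ twoBracketSpan D t := by
  have hDv : D v = -v ^ 2 := by
    rw [D.leibniz_of_mul_eq_one (mul_comm v _ ▸ hv), map_sub, hD, D.map_algebraMap, smul_eq_mul]
    ring
  have h2 : algebraMap k R 2⁻¹ * 2 = 1 := by
    rw [← map_ofNat (algebraMap k R) 2, ← map_mul, inv_mul_cancel₀ two_ne_zero, map_one]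
  refine mem_twoBracketSpan.2 ⟨algebraMap k R (c / 2) * v, -(algebraMap k R 2⁻¹ * v), ?_⟩
  simp only [D.leibniz, map_neg, D.map_algebraMap, hDv, smul_eq_mul, mul_zero, add_zero]
  rw [div_eq_mul_inv, map_mul]
  linear_combination (algebraMap k R 2⁻¹ * v) * hv + v * h2

section PuncturedLine

open Lagrange Finset

variable {k R : Type*} [Field k] [CharZero k] [CommRing R] [Algebra k R] [Algebra k[X] R]
  [IsScalarTower k k[X] R] {D : Derivation k R R}

local notation "φ" => algebraMap k[X] R

theorem algebraMap_polynomial_mem_range (hD : D (φ X) = 1) (q : k[X]) :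
    φ q ∈ LinearMap.range (D : R →ₗ[k] R) := by
  obtain ⟨a, rfl⟩ := derivative_surjective q
  exact ⟨φ a, D.map_algebraMap_polynomial_of_map_X_eq_one hD a⟩

theorem algebraMap_mul_mem_twoBracketSpan_of_degree_lt (hD : D (φ X) = 1) {ι : Type*}
    [Fintype ι] {p : ι → k} (hp : Function.Injective p) {w : R}
    (hw : φ (nodal univ p) * w = 1) {r : k[X]} (hr : r.degree < Fintype.card ι) :
    φ r * w ∈ twoBracketSpan D (φ X) := by
  classical
  rw [eq_interpolate (f := r) (s := univ) hp.injOn (by rwa [card_univ]),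
    interpolate_eq_nodalWeight_mul_nodal_div_X_sub_C, map_sum, sum_mul]
  refine Submodule.sum_mem _ fun i hi => ?_
  have hinv : (φ X - algebraMap k R (p i)) * (φ (nodal (univ.erase i) p) * w) = 1 := by
    rw [← hw, nodal_eq_mul_nodal_erase hi, map_mul, map_sub, ← mul_assoc, algebraMap_polynomial_C]
  rw [← nodal_erase_eq_nodal_div hi]
  convert Submodule.smul_mem _ (nodalWeight univ p i * eval (p i) r)
    (mem_twoBracketSpan_of_mul_eq_one hD (p i) hinv) using 1
  simp only [Algebra.smul_def, map_mul, algebraMap_polynomial_C]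
  ring

theorem algebraMap_mul_mem_twoBracketSpan (hD : D (φ X) = 1) {ι : Type*} [Fintype ι]
    {p : ι → k} (hp : Function.Injective p) {w : R}
    (hw : φ (nodal univ p) * w = 1) (q : k[X]) : φ q * w ∈ twoBracketSpan D (φ X) := by
  have hq : φ q * w = φ (q %ₘ nodal univ p) * w + φ (q /ₘ nodal univ p) := by
    conv_lhs => rw [← modByMonic_add_div q (nodal univ p), map_add, map_mul]
    linear_combination φ (q /ₘ nodal univ p) * hw
  rw [hq]
  refine add_mem (algebraMap_mul_mem_twoBracketSpan_of_degree_lt hD hp hw ?_)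
    (range_le_twoBracketSpan D _ (algebraMap_polynomial_mem_range hD _))
  simpa [degree_nodal] using degree_modByMonic_lt q (nodal_monic (s := univ) (v := p))

theorem algebraMap_mul_pow_succ_mem_twoBracketSpan (hD : D (φ X) = 1) {f : k[X]}
    (hf : f.Separable) {w : R} (hw : φ f * w = 1) {m : ℕ} (hm : m ≠ 0)
    (ih : ∀ q : k[X], φ q * w ^ m ∈ twoBracketSpan D (φ X)) (q : k[X]) :
    φ q * w ^ (m + 1) ∈ twoBracketSpan D (φ X) := by
  obtain ⟨c, d, hcd⟩ := hf
  have hm' : algebraMap k R (m : k)⁻¹ * m = 1 := by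
    rw [← map_natCast (algebraMap k R), ← map_mul, inv_mul_cancel₀ (Nat.cast_ne_zero.2 hm),
      map_one]
  have hcd' : φ c * φ f + φ d * φ (derivative f) = 1 := by
    simpa using congrArg φ hcd
  have key : φ q * w ^ (m + 1) = D (φ (C (-(m : k)⁻¹) * (q * d)) * w ^ m) +
      φ (q * c + C ((m : k)⁻¹) * derivative (q * d)) * w ^ m := by
    rw [D.leibniz, D.map_algebraMap_polynomial_of_map_X_eq_one hD, D.map_pow_of_mul_eq_one hw,
      D.map_algebraMap_polynomial_of_map_X_eq_one hD, derivative_C_mul]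
    simp only [map_mul, map_add, map_neg, algebraMap_polynomial_C, smul_eq_mul]
    linear_combination (-(φ q * w ^ (m + 1))) * hcd' + φ q * φ c * w ^ m * hw -
      φ q * φ d * φ (derivative f) * w ^ (m + 1) * hm'
  rw [key]
  exact add_mem (range_le_twoBracketSpan D _ ⟨_, rfl⟩) (ih _)

theorem algebraMap_mul_pow_mem_twoBracketSpan (hD : D (φ X) = 1) {ι : Type*} [Fintype ι]
    {p : ι → k} (hp : Function.Injective p) {w : R} (hw : φ (nodal univ p) * w = 1) :
    ∀ (m : ℕ) (q : k[X]), φ q * w ^ m ∈ twoBracketSpan D (φ X)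
  | 0, q => by simpa using range_le_twoBracketSpan D _ (algebraMap_polynomial_mem_range hD q)
  | 1, q => by simpa using algebraMap_mul_mem_twoBracketSpan hD hp hw q
  | m + 2, q =>
    algebraMap_mul_pow_succ_mem_twoBracketSpan hD (separable_prod_X_sub_C_iff.2 hp) hw
      m.succ_ne_zero (algebraMap_mul_pow_mem_twoBracketSpan hD hp hw (m + 1)) q

theorem twoBracketSpan_eq_top (hD : D (φ X) = 1) {ι : Type*} [Fintype ι] {p : ι → k}
    (hp : Function.Injective p) [IsLocalization.Away (∏ i, (X - C (p i))) R] :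
    twoBracketSpan D (φ X) = ⊤ := by
  refine eq_top_iff.2 fun g _ => ?_
  obtain ⟨m, q, hq⟩ := IsLocalization.Away.surj (∏ i, (X - C (p i))) g
  have hw := IsLocalization.Away.mul_invSelf (S := R) (∏ i, (X - C (p i)))
  have hg : g = φ q * IsLocalization.Away.invSelf (∏ i, (X - C (p i))) ^ m := by
    rw [← hq, mul_assoc, ← mul_pow, hw, one_pow, mul_one]
  exact hg ▸ algebraMap_mul_pow_mem_twoBracketSpan hD hp hw m q

end PuncturedLine

theorem derivation_punctured_line_sum_two_brackets_general
    (k : Type*) [Field k] [CharZero k]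
    (n : ℕ) (p : Fin n → k) (hp : Function.Injective p)
    (R : Type*) [CommRing R] [Algebra k R] [Algebra (Polynomial k) R]
    [IsScalarTower k (Polynomial k) R]
    [IsLocalization.Away (∏ i : Fin n, (X - C (p i))) R]
    (Dx xDx : Derivation k R R)
    (hDx : Dx (algebraMap (Polynomial k) R X) = 1)
    (hxDx : xDx (algebraMap (Polynomial k) R X) = algebraMap (Polynomial k) R X)
    (μ : Derivation k R R) :
    ∃ ν δ : Derivation k R R, μ = ⁅Dx, ν⁆ + ⁅xDx, δ⁆ := by
  set t := algebraMap (Polynomial k) R X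
  have ext_of_map_X {D₁ D₂ : Derivation k R R} (h : D₁ t = D₂ t) : D₁ = D₂ :=
    Derivation.ext_of_isLocalization_polynomial (Submonoid.powers (∏ i : Fin n, (X - C (p i)))) h
  have hxDx_eq : xDx = t • Dx :=
    ext_of_map_X (by rw [hxDx, Derivation.smul_apply, hDx, smul_eq_mul, mul_one])
  have hμt : μ t ∈ twoBracketSpan Dx t := by
    rw [twoBracketSpan_eq_top hDx hp]
    exact Submodule.mem_top
  obtain ⟨a, b, hab⟩ := mem_twoBracketSpan.1 hμt
  refine ⟨a • Dx, b • Dx, ext_of_map_X ?_⟩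
  rw [hxDx_eq, Dx.lie_smul_add_lie_smul_smul hDx, hab, Derivation.smul_apply, hDx, smul_eq_mul,
    mul_one]

/-- Let `C = 𝔸¹ \ {p₁,...,pₙ}` (n ≥ 1 distinct points, `k` algebraically closed of
characteristic zero), with coordinate ring `R = k[x, (∏ᵢ(x-pᵢ))⁻¹]`, realized as
the localization of `k[x]` away from `∏ᵢ (x - pᵢ)`.  Let `∂ₓ` and `x∂ₓ` be the
derivations of `R` sending (the image of) `x` to `1` and to `x` respectively.
Then every derivation `μ` of `R` can be written as `μ = [∂ₓ, ν] + [x∂ₓ, δ]` for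
suitable derivations `ν, δ`. -/
theorem derivation_punctured_line_sum_two_brackets
    (k : Type*) [Field k] [IsAlgClosed k] [CharZero k]
    (n : ℕ) (hn : 1 ≤ n) (p : Fin n → k) (hp : Function.Injective p)
    (R : Type*) [CommRing R] [Algebra k R] [Algebra (Polynomial k) R]
    [IsScalarTower k (Polynomial k) R]
    [IsLocalization.Away (∏ i : Fin n, (X - C (p i))) R]
    (Dx xDx : Derivation k R R)
    (hDx : Dx (algebraMap (Polynomial k) R X) = 1)
    (hxDx : xDx (algebraMap (Polynomial k) R X) = algebraMap (Polynomial k) R X)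
    (μ : Derivation k R R) :
    ∃ ν δ : Derivation k R R, μ = ⁅Dx, ν⁆ + ⁅xDx, δ⁆ :=
  derivation_punctured_line_sum_two_brackets_general k n p hp R Dx xDx hDx hxDx μ
end

section
/- Let E ⊂ k[x^{±1}, y^{±1}] be the subspace of Laurent polynomials with zero constant term, with the Poisson bracket {x^k y^ℓ, x^m y^n} = (kn - ℓm) x^{k+m} y^{ℓ+n}. Then every element of E is a single Poisson bracket of two elements of E; in particular E = {E, E} and the Lie algebra E has bracket width one. -/
/-!
With `wedge a b = a₁b₂ - a₂b₁` we have `{x^p, x^b} = wedge p b · x^{p+b}`, so bracketing with a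
fixed monomial `x^p` sends `x^{a-p}` to `wedge p a · x^a`. Hence `f = {x^p, h}` can be solved
monomial by monomial as soon as `wedge p a ≠ 0` on the support of `f`; then `h` has no constant
term, because `wedge p p = 0` keeps `p` out of that support. For `p = (1, N)` with `N > |a₂|` on
the support, `wedge p a = a₂ - N a₁` vanishes only at `a = 0`.
-/

/-- The Poisson bracket on the Laurent polynomial algebra `k[x^{±1}, y^{±1}]`
(modelled as the group algebra of `ℤ × ℤ`), determined on monomials by
`{x^k y^ℓ, x^m y^n} = (kn - ℓm)·x^{k+m} y^{ℓ+n}` and extended bilinearly. -/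
noncomputable def pb {k : Type*} [Field k]
    (f g : AddMonoidAlgebra k (ℤ × ℤ)) : AddMonoidAlgebra k (ℤ × ℤ) :=
  Finsupp.sum f.coeff fun a c => Finsupp.sum g.coeff fun b d =>
    AddMonoidAlgebra.single (a + b) (((a.1 * b.2 - a.2 * b.1 : ℤ) : k) * (c * d))

open AddMonoidAlgebra

def wedge (a b : ℤ × ℤ) : ℤ := a.1 * b.2 - a.2 * b.1

lemma wedge_self (a : ℤ × ℤ) : wedge a a = 0 := by
  unfold wedge; ring

lemma wedge_sub_self_right (p a : ℤ × ℤ) : wedge p (a - p) = wedge p a := by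
  simp only [wedge, Prod.fst_sub, Prod.snd_sub]; ring

section Bracket

variable {k : Type*} [Field k]

lemma pb_single_left (p : ℤ × ℤ) (c : k) (g : AddMonoidAlgebra k (ℤ × ℤ)) :
    pb (single p c) g = g.coeff.sum fun b d => single (p + b) ((wedge p b : k) * (c * d)) := by
  rw [pb, coeff_single, Finsupp.sum_single_index (by simp)]
  rfl

lemma exists_eq_pb_single (f : AddMonoidAlgebra k (ℤ × ℤ)) (p : ℤ × ℤ)
    (hf : ∀ a ∈ f.coeff.support, (wedge p a : k) ≠ 0) :
    ∃ h : AddMonoidAlgebra k (ℤ × ℤ), h.coeff 0 = 0 ∧ f = pb (single p 1) h := by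
  classical
  refine ⟨ofCoeff (f.coeff.sum fun a c => .single (a - p) (c / wedge p a)), ?_, ?_⟩
  · rw [coeff_ofCoeff, Finsupp.sum_apply]
    refine Finset.sum_eq_zero fun a ha => Finsupp.single_eq_of_ne fun hap => hf a ha ?_
    rw [sub_eq_zero.mp hap.symm, wedge_self, Int.cast_zero]
  · rw [pb_single_left, coeff_ofCoeff, Finsupp.sum_sum_index (by simp) (by simp [mul_add])]
    conv_lhs => rw [← sum_coeff_single f]
    refine Finsupp.sum_congr fun a ha => ?_
    rw [Finsupp.sum_single_index (by simp), add_sub_cancel, wedge_sub_self_right, one_mul,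
      mul_div_cancel₀ _ (hf a ha)]

end Bracket

lemma exists_wedge_ne_zero (s : Finset (ℤ × ℤ)) (hs : (0 : ℤ × ℤ) ∉ s) :
    ∃ p : ℤ × ℤ, p ≠ 0 ∧ ∀ a ∈ s, wedge p a ≠ 0 := by
  obtain ⟨N, hN⟩ := (s.image fun a => |a.2|).bddAbove
  refine ⟨(1, N + 1), by simp, fun a ha hwedge => ?_⟩
  have hlt : |a.2| < N + 1 := Int.lt_add_one_of_le (hN (Finset.mem_image_of_mem _ ha))
  have ha2 : a.2 = (N + 1) * a.1 := by simp only [wedge] at hwedge; linarith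
  have hN1 : 0 < N + 1 := lt_of_le_of_lt (abs_nonneg _) hlt
  rcases eq_or_ne a.1 0 with ha1 | ha1
  · have ha0 : a = 0 := Prod.ext ha1 (by rw [ha2, ha1, mul_zero]; rfl)
    exact hs (ha0 ▸ ha)
  · have : N + 1 ≤ |a.2| := by
      rw [ha2, abs_mul, abs_of_pos hN1]
      exact le_mul_of_one_le_right hN1.le (Int.one_le_abs ha1)
    omega

/-- Let `E ⊂ k[x^{±1}, y^{±1}]` be the subspace of Laurent polynomials with
zero constant term.  Every element of `E` is a single Poisson bracket of two
elements of `E`; in particular `E = {E, E}` and the Lie algebra `E` has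
bracket width one. -/
theorem laurent_zero_const_width_one
    (k : Type*) [Field k] [CharZero k]
    (f : AddMonoidAlgebra k (ℤ × ℤ)) (hf : f.coeff ((0 : ℤ), (0 : ℤ)) = 0) :
    ∃ g h : AddMonoidAlgebra k (ℤ × ℤ),
      g.coeff ((0 : ℤ), (0 : ℤ)) = 0 ∧ h.coeff ((0 : ℤ), (0 : ℤ)) = 0 ∧ f = pb g h := by
  obtain ⟨p, hp0, hp⟩ := exists_wedge_ne_zero f.coeff.support (Finsupp.notMem_support_iff.mpr hf)
  obtain ⟨h, hh0, rfl⟩ := exists_eq_pb_single f p fun a ha => Int.cast_ne_zero.mpr (hp a ha)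
  exact ⟨single p 1, h, by rw [coeff_single, Finsupp.single_apply]; exact if_neg hp0, hh0, rfl⟩
end

section
/- The Lie algebra E of Laurent polynomials in k[x^{±1}, y^{±1}] with zero constant term, under the Poisson bracket {x^k y^ℓ, x^m y^n} = (kn - ℓm)x^{k+m}y^{ℓ+n}, is simple: every nonzero Lie ideal equals E. -/
namespace LaurentPoisson

open AddMonoidAlgebra

def symp (u v : ℤ × ℤ) : ℤ := u.1 * v.2 - u.2 * v.1

@[simp] theorem symp_self (u : ℤ × ℤ) : symp u u = 0 := by
  simp only [symp]; ring

@[simp] theorem symp_zero_left (u : ℤ × ℤ) : symp 0 u = 0 := by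
  simp [symp]

theorem symp_sub_left (u v w : ℤ × ℤ) : symp (u - v) w = symp u w - symp v w := by
  simp only [symp, Prod.fst_sub, Prod.snd_sub]; ring

theorem symp_sub_right (u v w : ℤ × ℤ) : symp u (v - w) = symp u v - symp u w := by
  simp only [symp, Prod.fst_sub, Prod.snd_sub]; ring

section Isolation

variable {k G : Type*} [Field k]

theorem single_one_mem_of_separating (I : Submodule k (AddMonoidAlgebra k G))
    (hsep : ∀ a a' : G, a ≠ a' → ∃ w : G → k, w a ≠ w a' ∧
      ∀ f ∈ I, ∃ g ∈ I, ∀ x, g.coeff x = w x * f.coeff x)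
    {f : AddMonoidAlgebra k G} (hf : f ∈ I) {a : G} (ha : a ∈ f.coeff.support) :
    single a 1 ∈ I := by
  induction hn : f.coeff.support.card using Nat.strong_induction_on generalizing f with
  | _ n ih =>
  by_cases hsub : f.coeff.support ⊆ {a}
  · have hfa : f.coeff a ≠ 0 := Finsupp.mem_support_iff.mp ha
    have hf_eq : f = single a (f.coeff a) :=
      coeff_injective (Finsupp.eq_single_iff.mpr ⟨hsub, rfl⟩)
    have : single a (1 : k) = (f.coeff a)⁻¹ • f := by
      rw [hf_eq, smul_single, smul_eq_mul, coeff_single, Finsupp.single_eq_same,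
        inv_mul_cancel₀ hfa]
    exact this ▸ I.smul_mem _ hf
  · obtain ⟨a', ha', hne⟩ : ∃ a' ∈ f.coeff.support, a' ≠ a := by
      simpa only [Finset.not_subset, Finset.mem_singleton] using hsub
    obtain ⟨w, hw, hwI⟩ := hsep a a' hne.symm
    obtain ⟨g, hgI, hgw⟩ := hwI f hf
    have hcoeff : ∀ x, (g - w a' • f).coeff x = (w x - w a') * f.coeff x := fun x => by
      simp only [coeff_sub, coeff_smul, Finsupp.sub_apply, Finsupp.smul_apply, smul_eq_mul, hgw]
      ring
    have hsupp : (g - w a' • f).coeff.support ⊂ f.coeff.support := by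
      refine Finset.ssubset_iff_of_subset (fun x hx => ?_) |>.mpr ⟨a', ha', ?_⟩
      · rw [Finsupp.mem_support_iff, hcoeff] at hx
        exact Finsupp.mem_support_iff.mpr (right_ne_zero_of_mul hx)
      · rw [Finsupp.notMem_support_iff, hcoeff, sub_self, zero_mul]
    refine ih _ (hn ▸ Finset.card_lt_card hsupp) (I.sub_mem hgI (I.smul_mem _ hf)) ?_ rfl
    rw [Finsupp.mem_support_iff, hcoeff]
    exact mul_ne_zero (sub_ne_zero.mpr hw) (Finsupp.mem_support_iff.mp ha)

theorem mem_of_forall_single_one_mem {I : Submodule k (AddMonoidAlgebra k G)}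
    {g : AddMonoidAlgebra k G} (h : ∀ a ∈ g.coeff.support, single a 1 ∈ I) : g ∈ I := by
  rw [← sum_coeff_single g]
  refine Submodule.finsuppSum_mem (R := k) I g.coeff _ fun a ha => ?_
  simpa [smul_single] using I.smul_mem (g.coeff a) (h a (Finsupp.mem_support_iff.mpr ha))

end Isolation

variable {k : Type*} [Field k]

theorem pb_single_single (a b : ℤ × ℤ) (c d : k) :
    pb (single a c) (single b d) = single (a + b) ((symp a b : k) * (c * d)) := by
  simp [pb, symp]

theorem coeff_pb_single (b : ℤ × ℤ) (c : k) (f : AddMonoidAlgebra k (ℤ × ℤ)) (x : ℤ × ℤ) :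
    (pb (single b c) f).coeff x = symp b (x - b) * c * f.coeff (x - b) := by
  simp only [pb, coeff_single, coeff_finsuppSum]
  rw [Finsupp.sum_single_index (by simp), Finsupp.sum_apply,
    Finsupp.sum_eq_single (x - b) (fun a _ hne => ?_) (by simp)]
  · simp [symp, mul_assoc]
  · rw [Finsupp.single_eq_of_ne]
    rintro rfl
    simp at hne

theorem coeff_pb_single_pb_single_pb_single (b : ℤ × ℤ) (f : AddMonoidAlgebra k (ℤ × ℤ))
    (x : ℤ × ℤ) :
    (pb (single (-(b + b)) 1) (pb (single b 1) (pb (single b 1) f))).coeff x =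
      ((-2 * symp b x ^ 3 : ℤ) : k) * f.coeff x := by
  rw [coeff_pb_single, coeff_pb_single, coeff_pb_single, show x - -(b + b) - b - b = x by abel,
    show x - -(b + b) - b = x + b by abel, show x - -(b + b) = x + (b + b) by abel]
  simp only [symp, Prod.fst_add, Prod.snd_add, Prod.fst_neg, Prod.snd_neg]
  push_cast
  ring

theorem exists_symp_ne_zero {u v : ℤ × ℤ} (hu : u ≠ 0) (hv : v ≠ 0) :
    ∃ d, symp d u ≠ 0 ∧ symp v d ≠ 0 := by
  by_contra! h
  have h1 := h (1, 0)
  have h2 := h (0, 1)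
  have h3 := h (1, 1)
  simp only [symp] at h1 h2 h3
  simp only [ne_eq, Prod.ext_iff, Prod.fst_zero, Prod.snd_zero, not_and_or] at hu hv
  omega

section Ideal

variable {I : Submodule k (AddMonoidAlgebra k (ℤ × ℤ))}
  (hI : ∀ f ∈ I, ∀ g : AddMonoidAlgebra k (ℤ × ℤ), g.coeff 0 = 0 → pb g f ∈ I)
include hI

theorem pb_single_one_mem {b : ℤ × ℤ} (hb : b ≠ 0) {f : AddMonoidAlgebra k (ℤ × ℤ)}
    (hf : f ∈ I) : pb (single b 1) f ∈ I :=
  hI f hf _ (Finsupp.single_eq_of_ne hb.symm)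

theorem exists_separating_weight [CharZero k] (a a' : ℤ × ℤ) (hne : a ≠ a') :
    ∃ w : ℤ × ℤ → k, w a ≠ w a' ∧ ∀ f ∈ I, ∃ g ∈ I, ∀ x, g.coeff x = w x * f.coeff x := by
  obtain ⟨b, hb, -⟩ := exists_symp_ne_zero (sub_ne_zero.mpr hne) (sub_ne_zero.mpr hne)
  have hb0 : b ≠ 0 := by rintro rfl; simp at hb
  have hsymp : symp b a ≠ symp b a' := by
    rwa [symp_sub_right, sub_ne_zero] at hb
  refine ⟨fun x => ((-2 * symp b x ^ 3 : ℤ) : k), ?_, fun f hf => ⟨_, ?_,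
    coeff_pb_single_pb_single_pb_single b f⟩⟩
  · have hcube := (Odd.strictMono_pow (R := ℤ) (by decide : Odd 3)).injective.ne hsymp
    exact Int.cast_injective.ne (by omega)
  · have hbb : -(b + b) ≠ 0 := by
      simpa [Prod.ext_iff, ← two_mul] using hb0
    exact pb_single_one_mem hI hbb (pb_single_one_mem hI hb0 (pb_single_one_mem hI hb0 hf))

theorem single_one_mem_of_symp_ne_zero [CharZero k] {a c : ℤ × ℤ} (ha : single a (1 : k) ∈ I)
    (hca : symp c a ≠ 0) : single c (1 : k) ∈ I := by
  have hca' : c - a ≠ 0 := by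
    rintro h; rw [sub_eq_zero.mp h, symp_self] at hca; exact hca rfl
  have h := I.smul_mem ((symp c a : k))⁻¹ (pb_single_one_mem hI hca' ha)
  rwa [pb_single_single, sub_add_cancel, symp_sub_left, symp_self, sub_zero, smul_single,
    smul_eq_mul, mul_one, mul_one, inv_mul_cancel₀ (by exact_mod_cast hca)] at h

theorem single_one_mem_of_ne_zero [CharZero k] {a c : ℤ × ℤ} (ha : single a (1 : k) ∈ I)
    (ha0 : a ≠ 0) (hc0 : c ≠ 0) : single c (1 : k) ∈ I := by
  obtain ⟨d, hda, hcd⟩ := exists_symp_ne_zero ha0 hc0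
  exact single_one_mem_of_symp_ne_zero hI (single_one_mem_of_symp_ne_zero hI ha hda) hcd

end Ideal

end LaurentPoisson

open LaurentPoisson AddMonoidAlgebra in
theorem laurent_zero_const_simple_general
    (k : Type*) [Field k] [CharZero k]
    (I : Submodule k (AddMonoidAlgebra k (ℤ × ℤ)))
    (hIE : ∀ f ∈ I, f.coeff ((0 : ℤ), (0 : ℤ)) = 0)
    (hideal : ∀ f ∈ I, ∀ g : AddMonoidAlgebra k (ℤ × ℤ),
      g.coeff ((0 : ℤ), (0 : ℤ)) = 0 → pb g f ∈ I)
    (hne : ∃ f ∈ I, f ≠ 0) :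
    ∀ g : AddMonoidAlgebra k (ℤ × ℤ), g.coeff ((0 : ℤ), (0 : ℤ)) = 0 → g ∈ I := by
  obtain ⟨f, hfI, hf0⟩ := hne
  obtain ⟨a, ha⟩ := Finsupp.support_nonempty_iff.mpr (coeff_eq_zero.not.mpr hf0)
  have ha0 : a ≠ 0 := by
    rintro rfl
    exact Finsupp.mem_support_iff.mp ha (hIE f hfI)
  have hmon : single a (1 : k) ∈ I :=
    single_one_mem_of_separating I (exists_separating_weight hideal) hfI ha
  intro g hg
  refine mem_of_forall_single_one_mem fun c hc => single_one_mem_of_ne_zero hideal hmon ha0 ?_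
  rintro rfl
  exact Finsupp.mem_support_iff.mp hc hg

/-- The Lie algebra `E` of Laurent polynomials in `k[x^{±1}, y^{±1}]` with zero
constant term, under the Poisson bracket
`{x^k y^ℓ, x^m y^n} = (kn - ℓm)·x^{k+m} y^{ℓ+n}`, is simple: every nonzero Lie
ideal of `E` (a subspace `I ⊆ E` stable under bracketing with all of `E`)
equals `E`. -/
theorem laurent_zero_const_simple
    (k : Type*) [Field k] [IsAlgClosed k] [CharZero k]
    (I : Submodule k (AddMonoidAlgebra k (ℤ × ℤ)))
    (hIE : ∀ f ∈ I, f.coeff ((0 : ℤ), (0 : ℤ)) = 0)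
    (hideal : ∀ f ∈ I, ∀ g : AddMonoidAlgebra k (ℤ × ℤ),
      g.coeff ((0 : ℤ), (0 : ℤ)) = 0 → pb g f ∈ I)
    (hne : ∃ f ∈ I, f ≠ 0) :
    ∀ g : AddMonoidAlgebra k (ℤ × ℤ), g.coeff ((0 : ℤ), (0 : ℤ)) = 0 → g ∈ I :=
  laurent_zero_const_simple_general k I hIE hideal hne
end

section
/- Let D_p = {xy = p(z)} with deg p = 2, p having simple roots, and let E = x·k[x,z] ⊕ y·k[y,z] ⊕ {(r(z)p(z))' : r ∈ k[z]} ⊂ O(D_p) with the Poisson bracket determined by {x,z}=x, {y,z}=-y, {x,y}=p'(z). Then every element of E can be written as a sum of at most two Poisson brackets of elements of E; i.e., the bracket width of E is at most two. -/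
/-!
For `d = {·, z}` one has `d x = x`, `d y = -y`, `d z = 0`, so `d` multiplies `x^(i+1) z^j` by
`i + 1` and `y^(i+1) z^j` by `-(i + 1)`; in characteristic zero it therefore maps
`x·k[x,z] ⊕ y·k[y,z]` onto itself. As `deg p = 2`, `p''` is a nonzero constant, so a scalar
multiple `c p'(z)` of `p'(z) ∈ E` satisfies `{f, c p'(z)} = {f, z}`; this writes `x·a + y·b` as one
bracket of elements of `E`. The rest is one more bracket, by `xy = p(z)`:
`{x, y r(z)} = x y r'(z) + r(z) p'(z) = (r p)'(z)`.
-/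

open Polynomial MvPolynomial

theorem Derivation.map_mvPolynomial_aeval {R A M σ : Type*} [CommSemiring R] [CommSemiring A]
    [Algebra R A] [AddCommMonoid M] [Module R M] [Module A M] [IsScalarTower R A M] [Fintype σ]
    (D : Derivation R A M) (f : σ → A) (a : MvPolynomial σ R) :
    D (MvPolynomial.aeval f a) = ∑ i, MvPolynomial.aeval f (pderiv i a) • D (f i) := by
  classical
  induction a using MvPolynomial.induction_on with
  | C c => simp
  | add a b ha hb => simp only [map_add, ha, hb, add_smul, Finset.sum_add_distrib]
  | mul_X a i ih =>
    simp only [map_mul, Derivation.leibniz, ih, MvPolynomial.aeval_X, Finset.smul_sum, smul_smul,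
      pderiv_X, smul_eq_mul, map_add, Pi.single_apply, mul_one, mul_zero, apply_ite, map_zero,
      add_smul, ite_smul, zero_smul, Finset.sum_add_distrib, Finset.sum_ite_eq, Finset.mem_univ,
      if_true]

theorem MvPolynomial.exists_add_X_mul_pderiv_eq {k σ : Type*} [Field k] [CharZero k] (i : σ)
    (a : MvPolynomial σ k) : ∃ b, b + X i * pderiv i b = a := by
  induction a using MvPolynomial.induction_on' with
  | monomial s c =>
    refine ⟨monomial s (c / (s i + 1)), ?_⟩
    have : (s i + 1 : k) ≠ 0 := by exact_mod_cast Nat.succ_ne_zero (s i)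
    rw [X_mul_pderiv_monomial, smul_monomial, ← map_add, nsmul_eq_mul]
    congr 1
    field_simp
    ring
  | add a b ha hb =>
    obtain ⟨a', rfl⟩ := ha
    obtain ⟨b', rfl⟩ := hb
    exact ⟨a' + b', by rw [map_add, mul_add]; abel⟩

theorem Derivation.map_mul_aeval_of_map_eq_smul {R A : Type*} [CommRing R] [CommRing A]
    [Algebra R A] (D : Derivation R A A) {u v : A} {c : R} (hu : D u = c • u) (hv : D v = 0)
    (a : MvPolynomial (Fin 2) R) :
    D (u * MvPolynomial.aeval ![u, v] a)
      = c • (u * MvPolynomial.aeval ![u, v] (a + X 0 * pderiv 0 a)) := by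
  simp only [Derivation.leibniz, D.map_mvPolynomial_aeval, Fin.sum_univ_two, hu, hv, map_add,
    map_mul, MvPolynomial.aeval_X, Matrix.cons_val_zero, Matrix.cons_val_one, smul_eq_mul,
    Algebra.smul_def]
  ring

theorem Polynomial.derivative_derivative_of_natDegree_eq_two {R : Type*} [CommRing R] {p : R[X]}
    (hp : p.natDegree = 2) : derivative (derivative p) = C (2 * p.leadingCoeff) := by
  have : (derivative (derivative p)).natDegree ≤ 0 := by
    have h1 := natDegree_derivative_le p
    have h2 := natDegree_derivative_le (derivative p)
    omega
  rw [eq_C_of_natDegree_le_zero this, coeff_derivative, coeff_derivative, leadingCoeff, hp]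
  norm_num [mul_comm]

def danielewskiE {k A : Type*} [CommRing k] [CommRing A] [Algebra k A] (x y z : A) (p : k[X]) :
    Set A :=
  {e | ∃ (a b : MvPolynomial (Fin 2) k) (r : k[X]),
    e = x * MvPolynomial.aeval ![x, z] a + y * MvPolynomial.aeval ![y, z] b
      + Polynomial.aeval z (derivative (r * p))}

namespace danielewskiE

variable {k A : Type*} [CommRing k] [CommRing A] [Algebra k A] {x y z : A} {p : k[X]}

theorem x_mul_aeval_add_y_mul_aeval_mem (a b : MvPolynomial (Fin 2) k) :
    x * MvPolynomial.aeval ![x, z] a + y * MvPolynomial.aeval ![y, z] b ∈ danielewskiE x y z p :=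
  ⟨a, b, 0, by simp⟩

theorem aeval_derivative_mem (r : k[X]) :
    Polynomial.aeval z (derivative (r * p)) ∈ danielewskiE x y z p :=
  ⟨0, 0, r, by simp⟩

theorem x_mem : x ∈ danielewskiE x y z p :=
  ⟨1, 0, 0, by simp⟩

theorem y_mul_aeval_mem (r : k[X]) : y * Polynomial.aeval z r ∈ danielewskiE x y z p := by
  refine ⟨0, Polynomial.aeval (X 1) r, 0, ?_⟩
  rw [← Polynomial.aeval_algHom_apply]
  simp

end danielewskiE

section Bracket

variable {k A : Type*} [Field k] [CommRing A] [Algebra k A] (B : A →ₗ[k] A →ₗ[k] A)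

theorem bracket_aeval (hleib : ∀ f g h, B f (g * h) = g * B f h + h * B f g) (f z : A)
    (r : k[X]) : B f (Polynomial.aeval z r) = Polynomial.aeval z (derivative r) * B f z :=
  (Derivation.mk' (B f) (hleib f)).map_aeval r z

theorem bracket_y_mul_aeval_eq_aeval_derivative
    (hleib : ∀ f g h, B f (g * h) = g * B f h + h * B f g) {x y z : A} {p : k[X]}
    (hxz : B x z = x) (hxy : B x y = Polynomial.aeval z (derivative p))
    (hrel : x * y = Polynomial.aeval z p)
    (r : k[X]) : B x (y * Polynomial.aeval z r) = Polynomial.aeval z (derivative (r * p)) := by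
  rw [hleib, bracket_aeval B hleib, hxz, hxy, derivative_mul, map_add, map_mul, map_mul, ← hrel]
  ring

theorem bracket_aeval_derivative_C_inv_mul [CharZero k]
    (hleib : ∀ f g h, B f (g * h) = g * B f h + h * B f g) {p : k[X]} (hp : p.natDegree = 2)
    (f z : A) :
    B f (Polynomial.aeval z (derivative (Polynomial.C (2 * p.leadingCoeff)⁻¹ * p))) = B f z := by
  have hlc : 2 * p.leadingCoeff ≠ 0 :=
    mul_ne_zero two_ne_zero (leadingCoeff_ne_zero.mpr (ne_zero_of_natDegree_gt (hp ▸ two_pos)))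
  rw [bracket_aeval B hleib, derivative_C_mul, derivative_C_mul,
    derivative_derivative_of_natDegree_eq_two hp, ← Polynomial.C_mul, inv_mul_cancel₀ hlc,
    map_one, map_one, one_mul]

theorem bracket_self [CharZero k] (hanti : ∀ f g, B f g = -B g f) (f : A) : B f f = 0 := by
  have h : (2 : k) • B f f = 0 := by
    rw [two_smul]
    nth_rewrite 2 [hanti]
    exact add_neg_cancel _
  exact (smul_eq_zero.mp h).resolve_left two_ne_zero

theorem exists_bracket_eq_x_mul_aeval_add_y_mul_aeval [CharZero k]
    (hanti : ∀ f g, B f g = -B g f) (hleib : ∀ f g h, B f (g * h) = g * B f h + h * B f g)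
    {x y z : A} (hxz : B x z = x) (hyz : B y z = -y) (a b : MvPolynomial (Fin 2) k) :
    ∃ a' b' : MvPolynomial (Fin 2) k,
      B (x * MvPolynomial.aeval ![x, z] a' + y * MvPolynomial.aeval ![y, z] b') z
        = x * MvPolynomial.aeval ![x, z] a + y * MvPolynomial.aeval ![y, z] b := by
  obtain ⟨a', rfl⟩ := exists_add_X_mul_pderiv_eq 0 a
  obtain ⟨b', hb'⟩ := exists_add_X_mul_pderiv_eq 0 (-b)
  let D := Derivation.mk' (B z) (hleib z)
  have hDx : D x = (-1 : k) • x := by simp [D, hanti z x, hxz]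
  have hDy : D y = (1 : k) • y := by simp [D, hanti z y, hyz]
  have hDz : D z = 0 := bracket_self B hanti z
  refine ⟨a', b', ?_⟩
  rw [hanti, ← Derivation.coe_mk' (B z) (hleib z), map_add,
    D.map_mul_aeval_of_map_eq_smul hDx hDz, D.map_mul_aeval_of_map_eq_smul hDy hDz, hb']
  simp only [neg_smul, one_smul, map_neg]
  ring

theorem danielewskiE.exists_eq_bracket_add_bracket [CharZero k]
    (hanti : ∀ f g, B f g = -B g f) (hleib : ∀ f g h, B f (g * h) = g * B f h + h * B f g)
    {x y z : A} {p : k[X]} (hp : p.natDegree = 2) (hxz : B x z = x) (hyz : B y z = -y)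
    (hxy : B x y = Polynomial.aeval z (derivative p)) (hrel : x * y = Polynomial.aeval z p)
    {e : A} (he : e ∈ danielewskiE x y z p) :
    ∃ f₁ g₁ f₂ g₂ : A, f₁ ∈ danielewskiE x y z p ∧ g₁ ∈ danielewskiE x y z p ∧
      f₂ ∈ danielewskiE x y z p ∧ g₂ ∈ danielewskiE x y z p ∧ e = B f₁ g₁ + B f₂ g₂ := by
  obtain ⟨a, b, r, rfl⟩ := he
  obtain ⟨a', b', hab⟩ := exists_bracket_eq_x_mul_aeval_add_y_mul_aeval B hanti hleib hxz hyz a b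
  refine ⟨_, _, x, y * Polynomial.aeval z r, x_mul_aeval_add_y_mul_aeval_mem a' b',
    aeval_derivative_mem (Polynomial.C (2 * p.leadingCoeff)⁻¹), x_mem, y_mul_aeval_mem r, ?_⟩
  rw [bracket_aeval_derivative_C_inv_mul B hleib hp, hab,
    bracket_y_mul_aeval_eq_aeval_derivative B hleib hxz hxy hrel]

end Bracket

theorem danielewski_deg_two_width_le_two_general
    (k : Type*) [Field k] [CharZero k]
    (p : Polynomial k) (hdeg : p.natDegree = 2) :
    let P := MvPolynomial (Fin 3) k
    let rel : P := X 0 * X 1 - Polynomial.aeval (X 2) p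
    let A := P ⧸ Ideal.span {rel}
    let mk := Ideal.Quotient.mk (Ideal.span {rel})
    let xb : A := mk (X 0)
    let yb : A := mk (X 1)
    let zb : A := mk (X 2)
    let InE : A → Prop := fun e =>
      ∃ (a b : MvPolynomial (Fin 2) k) (r : Polynomial k),
        e = xb * MvPolynomial.aeval ![xb, zb] a
            + yb * MvPolynomial.aeval ![yb, zb] b
            + Polynomial.aeval zb (derivative (r * p))
    ∀ (B : A →ₗ[k] A →ₗ[k] A)
      (_ : ∀ f g, B f g = - B g f)
      (_ : ∀ f g h, B f (g * h) = g * B f h + h * B f g)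
      (_ : B xb zb = xb) (_ : B yb zb = - yb)
      (_ : B xb yb = Polynomial.aeval zb (derivative p)),
    ∀ e : A, InE e →
      ∃ f₁ g₁ f₂ g₂ : A, InE f₁ ∧ InE g₁ ∧ InE f₂ ∧ InE g₂ ∧
        e = B f₁ g₁ + B f₂ g₂ := by
  intro P rel A mk xb yb zb InE B hanti hleib hxz hyz hxy e he
  have hrel : xb * yb = Polynomial.aeval zb p := by
    rw [← map_mul, Ideal.Quotient.eq.mpr (Ideal.mem_span_singleton_self rel)]
    exact (Polynomial.aeval_algHom_apply (Ideal.Quotient.mkₐ k (Ideal.span {rel})) (X 2) p).symm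
  exact danielewskiE.exists_eq_bracket_add_bracket B hanti hleib hdeg hxz hyz hxy hrel he

/-- Let `D_p = {xy = p(z)}` with `deg p = 2` and `p` with simple roots, and let
`E = x·k[x,z] ⊕ y·k[y,z] ⊕ {(r(z)p(z))' : r ∈ k[z]} ⊂ O(D_p)`, with the
Poisson bracket (a bilinear biderivation `B`) determined by `{x,z} = x`,
`{y,z} = -y`, `{x,y} = p'(z)`.  Then every element of `E` is a sum of at most
two Poisson brackets of elements of `E`: the bracket width of `E` is ≤ 2. -/
theorem danielewski_deg_two_width_le_two
    (k : Type*) [Field k] [IsAlgClosed k] [CharZero k]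
    (p : Polynomial k) (hdeg : p.natDegree = 2) (hp : Squarefree p) :
    let P := MvPolynomial (Fin 3) k
    let rel : P := X 0 * X 1 - Polynomial.aeval (X 2) p
    let A := P ⧸ Ideal.span {rel}
    let mk := Ideal.Quotient.mk (Ideal.span {rel})
    let xb : A := mk (X 0)
    let yb : A := mk (X 1)
    let zb : A := mk (X 2)
    let InE : A → Prop := fun e =>
      ∃ (a b : MvPolynomial (Fin 2) k) (r : Polynomial k),
        e = xb * MvPolynomial.aeval ![xb, zb] a
            + yb * MvPolynomial.aeval ![yb, zb] b
            + Polynomial.aeval zb (derivative (r * p))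
    ∀ (B : A →ₗ[k] A →ₗ[k] A)
      (_ : ∀ f g, B f g = - B g f)
      (_ : ∀ f g h, B f (g * h) = g * B f h + h * B f g)
      (_ : B xb zb = xb) (_ : B yb zb = - yb)
      (_ : B xb yb = Polynomial.aeval zb (derivative p)),
    ∀ e : A, InE e →
      ∃ f₁ g₁ f₂ g₂ : A, InE f₁ ∧ InE g₁ ∧ InE f₂ ∧ InE g₂ ∧
        e = B f₁ g₁ + B f₂ g₂ :=
  danielewski_deg_two_width_le_two_general k p hdeg
end
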